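/- arXiv:2302.03003 — 5 statements merged into one kernel-verified Lean document; each statement's English description precedes it below -/
import Mathlib

section
/- The one-dimensional SSIM luminance component l(x,y) = (2xy + c)/(x² + y² + c) with c > 0, viewed as a function of x > 0 for fixed y > 0, is quasi-concave on (0,∞); equivalently, 1 − l(x,y) is quasi-convex in x on (0,∞). -/
/-!
The luminance is a ratio of a nonnegative affine function of `x` and a positive convex quadratic.
For `r ≥ 0` the superlevel set `{r ≤ f / g}` is the sublevel set `{r • g - f ≤ 0}` of a convex
function, hence convex; for `r < 0` it is the whole domain. Composing with the antitone map
`t ↦ 1 - t` turns quasi-concavity into quasi-convexity.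
-/

open Set

theorem ConcaveOn.quasiconcaveOn_div {𝕜 E : Type*} [Field 𝕜] [LinearOrder 𝕜]
    [IsStrictOrderedRing 𝕜] [AddCommMonoid E] [Module 𝕜 E] {s : Set E} {f g : E → 𝕜}
    (hf : ConcaveOn 𝕜 s f) (hg : ConvexOn 𝕜 s g) (hf₀ : ∀ x ∈ s, 0 ≤ f x)
    (hg₀ : ∀ x ∈ s, 0 < g x) : QuasiconcaveOn 𝕜 s fun x => f x / g x := by
  intro r
  show Convex 𝕜 {x ∈ s | r ≤ f x / g x}
  rcases lt_or_ge r 0 with hr | hr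
  · have hall : {x ∈ s | r ≤ f x / g x} = s :=
      sep_eq_self_iff_mem_true.2 fun x hx => hr.le.trans (div_nonneg (hf₀ x hx) (hg₀ x hx).le)
    rw [hall]
    exact hg.1
  · have hlevel : {x ∈ s | r ≤ f x / g x} = {x ∈ s | ((fun x => r • g x) - f) x ≤ 0} :=
      sep_ext_iff.2 fun x hx => by
        rw [le_div_iff₀ (hg₀ x hx), Pi.sub_apply, sub_nonpos, smul_eq_mul]
    rw [hlevel]
    exact ((hg.smul hr).sub hf).convex_le 0

/-- The SSIM luminance component is quasi-concave in its first argument on `(0, ∞)`,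
equivalently `1 - l` is quasi-convex there. -/
theorem ssim_luminance_quasiconcave (y c : ℝ) (hy : 0 < y) (hc : 0 < c) :
    QuasiconcaveOn ℝ (Set.Ioi (0 : ℝ))
        (fun x => (2 * x * y + c) / (x ^ 2 + y ^ 2 + c)) ∧
    QuasiconvexOn ℝ (Set.Ioi (0 : ℝ))
        (fun x => 1 - (2 * x * y + c) / (x ^ 2 + y ^ 2 + c)) := by
  have hnum : ConcaveOn ℝ (Ioi 0) fun x : ℝ => 2 * x * y + c :=
    (((concaveOn_id (convex_Ioi 0)).smul (by positivity : (0 : ℝ) ≤ 2 * y)).add_const c).congr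
      fun x _ => by simp only [Pi.add_apply, id, smul_eq_mul]; ring
  have hden : ConvexOn ℝ (Ioi 0) fun x : ℝ => x ^ 2 + y ^ 2 + c :=
    (((Even.convexOn_pow even_two).add_const (y ^ 2 + c)).subset (subset_univ _)
      (convex_Ioi 0)).congr fun x _ => by simp only [Pi.add_apply]; ring
  have hlum := hnum.quasiconcaveOn_div hden (fun x (hx : 0 < x) => by positivity)
    fun x _ => by positivity
  exact ⟨hlum, hlum.antitone_comp fun a b hab => sub_le_sub_left hab 1⟩
end

section
/- RED gradient identity: let G : ℝⁿ → ℝⁿ be continuously differentiable, locally homogeneous (i.e., G(x) = (∇G(x)) x, where ∇G(x) is the Jacobian), and have a symmetric Jacobian. Then the function R(x) = (1/2) xᵀ (x − G(x)) has gradient ∇R(x) = x − G(x). -/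
open scoped RealInnerProductSpace

/-- RED gradient identity: under continuous differentiability, local homogeneity and
symmetry of the Jacobian, `R(x) = ½ xᵀ(x − G(x))` has gradient `x − G(x)`. -/
theorem red_gradient_identity {n : ℕ}
    (G : EuclideanSpace ℝ (Fin n) → EuclideanSpace ℝ (Fin n))
    (hG : ContDiff ℝ 1 G)
    (hhom : ∀ x, fderiv ℝ G x x = G x)
    (hsym : ∀ x u v, ⟪fderiv ℝ G x u, v⟫ = ⟪u, fderiv ℝ G x v⟫) :
    ∀ x, gradient (fun x => (1 / 2 : ℝ) * ⟪x, x - G x⟫) x = x - G x := by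
  intro x
  have hGd : DifferentiableAt ℝ G x := (hG.differentiable one_ne_zero).differentiableAt
  have h1 : HasFDerivAt (fun y => y - G y)
      (ContinuousLinearMap.id ℝ _ - fderiv ℝ G x) x :=
    (hasFDerivAt_id x).sub hGd.hasFDerivAt
  have h2 := (hasFDerivAt_id x).inner ℝ h1
  have h3 := h2.const_mul ((1 : ℝ) / 2)
  have key : HasGradientAt (fun x => (1 / 2 : ℝ) * ⟪x, x - G x⟫) (x - G x) x := by
    rw [hasGradientAt_iff_hasFDerivAt]
    convert h3 using 1
    · rfl
    · rfl
    ext u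
    simp only [InnerProductSpace.toDual_apply_apply, ContinuousLinearMap.smul_apply,
      ContinuousLinearMap.comp_apply, ContinuousLinearMap.prod_apply,
      ContinuousLinearMap.id_apply, ContinuousLinearMap.sub_apply,
      fderivInnerCLM_apply, smul_eq_mul, id_eq]
    have hx : ⟪x, fderiv ℝ G x u⟫ = ⟪G x, u⟫ := by
      rw [← hsym x x u, hhom x]
    rw [inner_sub_left, inner_sub_right, inner_sub_right, hx,
      real_inner_comm u x, real_inner_comm u (G x)]
    ring
  exact key.gradient
end

section
/- If G : ℝⁿ → ℝⁿ is differentiable with symmetric Jacobian satisfying 0 ⪯ ∇G(x) ⪯ I for all x (passivity under the 1-Lipschitz condition), then R(x) = (1/2) xᵀ(x − G(x)), under the local homogeneity assumption ∇G(x) x = G(x), is a convex function. -/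
open scoped RealInnerProductSpace

/-- Passivity implies convexity of the RE prior: if `0 ⪯ ∇G(x) ⪯ I` with symmetric
Jacobian and local homogeneity, then `R(x) = ½ xᵀ(x − G(x))` is convex. -/
theorem re_prior_convex {n : ℕ}
    (G : EuclideanSpace ℝ (Fin n) → EuclideanSpace ℝ (Fin n))
    (hG : Differentiable ℝ G)
    (hsym : ∀ x u v, ⟪fderiv ℝ G x u, v⟫ = ⟪u, fderiv ℝ G x v⟫)
    (hpsd : ∀ x v, 0 ≤ ⟪fderiv ℝ G x v, v⟫)
    (hle : ∀ x v, ⟪fderiv ℝ G x v, v⟫ ≤ ‖v‖ ^ 2)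
    (hhom : ∀ x, fderiv ℝ G x x = G x) :
    ConvexOn ℝ Set.univ (fun x => (1 / 2 : ℝ) * ⟪x, x - G x⟫) := by
  set f : EuclideanSpace ℝ (Fin n) → ℝ := fun x => (1 / 2 : ℝ) * ⟪x, x - G x⟫ with hf
  refine ⟨convex_univ, ?_⟩
  intro x _ y _ a b ha hb hab
  set v : EuclideanSpace ℝ (Fin n) := y - x with hv
  set c : ℝ → EuclideanSpace ℝ (Fin n) := fun t => x + t • v with hc
  set g : ℝ → ℝ := fun t => f (c t) with hg
  set φ : ℝ → ℝ := fun t => ⟪c t - G (c t), v⟫ with hφ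
  have hcd : ∀ t, HasDerivAt c v t := fun t => by
    simpa [hc] using ((hasDerivAt_id t).smul_const v).const_add x
  -- derivative of g
  have hgd : ∀ t, HasDerivAt g (φ t) t := by
    intro t
    have hD : HasDerivAt (fun t => c t - G (c t)) (v - fderiv ℝ G (c t) v) t :=
      (hcd t).sub ((hG (c t)).hasFDerivAt.comp_hasDerivAt t (hcd t))
    have h1 := ((hcd t).inner ℝ hD).const_mul (1 / 2 : ℝ)
    refine h1.congr_deriv ?_
    have key : ⟪c t, fderiv ℝ G (c t) v⟫ = ⟪G (c t), v⟫ := by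
      rw [← hsym (c t) (c t) v, hhom (c t)]
    simp only [hφ, inner_sub_left, inner_sub_right, key]
    rw [real_inner_comm v (c t), real_inner_comm v (G (c t))]
    ring
  -- monotonicity of φ
  have hmono : Monotone φ := by
    intro s t hst
    rcases eq_or_lt_of_le hst with rfl | hst
    · exact le_refl _
    have hφ_eq : ∀ u, φ u = ⟪x, v⟫ + u * ‖v‖ ^ 2 - ⟪G (c u), v⟫ := by
      intro u
      simp only [hφ, hc, inner_sub_left, inner_add_left, real_inner_smul_left,
        real_inner_self_eq_norm_sq]
      try ring
    set h : ℝ → ℝ := fun u => ⟪G (c u), v⟫ with hh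
    have hhd : ∀ u, HasDerivAt h ⟪fderiv ℝ G (c u) v, v⟫ u := by
      intro u
      have hGc : HasDerivAt (fun u => G (c u)) (fderiv ℝ G (c u) v) u :=
        (hG (c u)).hasFDerivAt.comp_hasDerivAt u (hcd u)
      simpa using hGc.inner ℝ (hasDerivAt_const u v)
    -- MVT bound: h t - h s ≤ (t - s) * ‖v‖^2
    obtain ⟨ξ, _, hξ⟩ := exists_hasDerivAt_eq_slope h (fun u => ⟪fderiv ℝ G (c u) v, v⟫)
      hst (fun u _ => (hhd u).continuousAt.continuousWithinAt) (fun u _ => hhd u)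
    have hbound : h t - h s ≤ (t - s) * ‖v‖ ^ 2 := by
      have : (h t - h s) / (t - s) ≤ ‖v‖ ^ 2 := hξ ▸ hle (c ξ) v
      calc h t - h s = (h t - h s) / (t - s) * (t - s) := by
            rw [div_mul_cancel₀ _ (show t - s ≠ 0 by linarith)]
        _ ≤ ‖v‖ ^ 2 * (t - s) := by
            apply mul_le_mul_of_nonneg_right this (by linarith)
        _ = (t - s) * ‖v‖ ^ 2 := by ring
    have := hbound
    rw [hφ_eq s, hφ_eq t]
    simp only [hh] at hbound
    nlinarith [hbound]
  -- g is convex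
  have hgconv : ConvexOn ℝ Set.univ g := by
    have hdiff : Differentiable ℝ g := fun t => (hgd t).differentiableAt
    have hderiv : deriv g = φ := funext fun t => (hgd t).deriv
    have := Monotone.convexOn_univ_of_deriv hdiff (hderiv ▸ hmono)
    exact this
  -- conclude
  have hxy : a • x + b • y = c b := by
    have : a = 1 - b := by linarith
    simp only [hc, hv, this, smul_sub, sub_smul, one_smul]
    abel
  have h0 : g 0 = f x := by simp [hg, hc]
  have h1 : g 1 = f y := by simp [hg, hc, hv]
  have := hgconv.2 (Set.mem_univ (0 : ℝ)) (Set.mem_univ (1 : ℝ)) ha hb hab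
  simp only [smul_eq_mul, mul_zero, mul_one, zero_add, h0, h1] at this
  calc f (a • x + b • y) = g b := by rw [hxy]
    _ ≤ a * f x + b * f y := this
  -- done
end

section
/- Accelerated gradient descent convergence: let F : ℝⁿ → ℝ be convex and differentiable with L-Lipschitz gradient and minimizer x*. Then Nesterov's accelerated gradient method with step size 1/L and momentum coefficients (t⁽ᵏ⁻¹⁾−1)/t⁽ᵏ⁾ (with t⁽ᵏ⁾ as in the standard recursion) produces iterates x⁽ᵏ⁾ with F(x⁽ᵏ⁾) − F(x*) ≤ 2L∥x⁽⁰⁾ − x*∥²/(k+1)². -/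
open RealInnerProductSpace

section NesterovAux

variable {n : ℕ}
local notation "E" => EuclideanSpace ℝ (Fin n)

private lemma nesterov_line_hasDerivAt (F : E → ℝ) (hdiff : Differentiable ℝ F)
    (a d : E) (τ : ℝ) :
    HasDerivAt (fun τ : ℝ => F (a + τ • d)) ⟪gradient F (a + τ • d), d⟫ τ := by
  have hγ : HasDerivAt (fun τ : ℝ => a + τ • d) d τ := by
    simpa using ((hasDerivAt_id τ).smul_const d).const_add a
  have hF : HasFDerivAt F ((InnerProductSpace.toDual ℝ _) (gradient F (a + τ • d)))
      (a + τ • d) :=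
    hasGradientAt_iff_hasFDerivAt.mp (hdiff _).hasGradientAt
  exact hF.comp_hasDerivAt τ hγ

private lemma nesterov_convex_first_order (F : E → ℝ) (hconv : ConvexOn ℝ Set.univ F)
    (hdiff : Differentiable ℝ F) (a b : E) :
    F a + ⟪gradient F a, b - a⟫ ≤ F b := by
  set φ : ℝ → ℝ := fun τ => F (a + τ • (b - a)) with hφ
  have hφconv : ConvexOn ℝ Set.univ φ := by
    have := hconv.comp_affineMap (AffineMap.lineMap a b : ℝ →ᵃ[ℝ] E)
    have heq : (F ∘ ⇑(AffineMap.lineMap a b : ℝ →ᵃ[ℝ] E)) = φ := by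
      funext τ; simp [AffineMap.lineMap_apply, vsub_eq_sub, vadd_eq_add, add_comm, hφ]
    rw [heq] at this; simpa using this
  have hd : HasDerivAt φ ⟪gradient F a, b - a⟫ 0 := by
    simpa using nesterov_line_hasDerivAt F hdiff a (b - a) 0
  have h := hφconv.le_slope_of_hasDerivAt (Set.mem_univ (0:ℝ)) (Set.mem_univ (1:ℝ))
    one_pos hd
  have hslope : slope φ 0 1 = F b - F a := by
    simp [slope_def_field, hφ]
  linarith [h.trans_eq hslope]

private lemma nesterov_descent_lemma (F : E → ℝ) (L : NNReal) (hdiff : Differentiable ℝ F)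
    (hsmooth : LipschitzWith L (gradient F)) (a b : E) :
    F b ≤ F a + ⟪gradient F a, b - a⟫ + (L : ℝ) / 2 * ‖b - a‖ ^ 2 := by
  set d : E := b - a with hd
  set φ' : ℝ → ℝ := fun τ => ⟪gradient F (a + τ • d), d⟫ with hφ'
  have hderiv : ∀ τ ∈ Set.uIcc (0:ℝ) 1,
      HasDerivAt (fun τ : ℝ => F (a + τ • d)) (φ' τ) τ :=
    fun τ _ => nesterov_line_hasDerivAt F hdiff a d τ
  have hcont : Continuous φ' := by
    have hg : Continuous (gradient F) := hsmooth.continuous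
    exact Continuous.inner (hg.comp (by continuity)) continuous_const
  have hint : IntervalIntegrable φ' MeasureTheory.volume 0 1 :=
    hcont.intervalIntegrable 0 1
  have hftc : ∫ τ in (0:ℝ)..1, φ' τ = F (a + (1:ℝ) • d) - F (a + (0:ℝ) • d) :=
    intervalIntegral.integral_eq_sub_of_hasDerivAt hderiv hint
  have hbound : ∀ τ ∈ Set.Icc (0:ℝ) 1, φ' τ ≤ φ' 0 + (L : ℝ) * τ * ‖d‖ ^ 2 := by
    intro τ hτ
    have h1 : φ' τ - φ' 0 = ⟪gradient F (a + τ • d) - gradient F (a + (0:ℝ) • d), d⟫ := by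
      simp [hφ', inner_sub_left]
    have h2 : ⟪gradient F (a + τ • d) - gradient F (a + (0:ℝ) • d), d⟫
        ≤ ‖gradient F (a + τ • d) - gradient F (a + (0:ℝ) • d)‖ * ‖d‖ :=
      real_inner_le_norm _ _
    have h3 : ‖gradient F (a + τ • d) - gradient F (a + (0:ℝ) • d)‖
        ≤ (L : ℝ) * (τ * ‖d‖) := by
      have hdist := hsmooth.dist_le_mul (a + τ • d) (a + (0:ℝ) • d)
      rw [dist_eq_norm, dist_eq_norm] at hdist
      have heq : (a + τ • d) - (a + (0:ℝ) • d) = τ • d := by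
        simp
      rw [heq] at hdist
      calc ‖gradient F (a + τ • d) - gradient F (a + (0:ℝ) • d)‖
          ≤ (L:ℝ) * ‖τ • d‖ := hdist
        _ = (L:ℝ) * (τ * ‖d‖) := by rw [norm_smul]; simp [abs_of_nonneg hτ.1]
    nlinarith [norm_nonneg d, h2.trans (by nlinarith [norm_nonneg d] : ‖gradient F (a + τ • d) - gradient F (a + (0:ℝ) • d)‖ * ‖d‖ ≤ (L:ℝ) * (τ * ‖d‖) * ‖d‖)]
  have hmono : ∫ τ in (0:ℝ)..1, φ' τ ≤ ∫ τ in (0:ℝ)..1, (φ' 0 + (L:ℝ) * τ * ‖d‖ ^ 2) := by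
    apply intervalIntegral.integral_mono_on (by norm_num) hint
    · exact (Continuous.intervalIntegrable (by fun_prop) 0 1)
    · exact hbound
  have hval : ∫ τ in (0:ℝ)..1, (φ' 0 + (L:ℝ) * τ * ‖d‖ ^ 2) = φ' 0 + (L:ℝ) / 2 * ‖d‖ ^ 2 := by
    rw [intervalIntegral.integral_congr (g := fun τ : ℝ => φ' 0 + ((L:ℝ) * ‖d‖ ^ 2) * τ)
      (fun τ _ => by ring)]
    rw [intervalIntegral.integral_add intervalIntegrable_const (by
      apply Continuous.intervalIntegrable; fun_prop),
      intervalIntegral.integral_const_mul, intervalIntegral.integral_const,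
      integral_id]
    simp
    ring
  have hφ'0 : φ' 0 = ⟪gradient F a, b - a⟫ := by simp [hφ', hd]
  have hfin : F b - F a ≤ φ' 0 + (L:ℝ)/2 * ‖d‖^2 := by
    have h : F (a + (1:ℝ) • d) - F (a + (0:ℝ) • d) ≤ φ' 0 + (L:ℝ)/2 * ‖d‖^2 := by
      rw [← hftc]; exact hmono.trans_eq hval
    simpa [hd] using h
  rw [hφ'0] at hfin; linarith

private lemma nesterov_key_step (F : E → ℝ) (L : NNReal) (hL : 0 < (L:ℝ))
    (hconv : ConvexOn ℝ Set.univ F) (hdiff : Differentiable ℝ F)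
    (hsmooth : LipschitzWith L (gradient F)) (sv z : E) :
    F (sv - (1/(L:ℝ)) • gradient F sv)
      ≤ F z + (L:ℝ)/2 * (‖sv - z‖^2 - ‖sv - (1/(L:ℝ)) • gradient F sv - z‖^2) := by
  set g : E := gradient F sv with hg
  set xp : E := sv - (1/(L:ℝ)) • g with hxp
  have h1 := nesterov_descent_lemma F L hdiff hsmooth sv xp
  have h2 := nesterov_convex_first_order F hconv hdiff sv z
  have e0 : xp - sv = -((1/(L:ℝ)) • g) := by rw [hxp]; abel
  have e1 : ⟪g, xp - sv⟫ = -(1/(L:ℝ)) * ‖g‖^2 := by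
    rw [e0, inner_neg_right, real_inner_smul_right, real_inner_self_eq_norm_sq]; ring
  have e2 : ‖xp - sv‖^2 = (1/(L:ℝ))^2 * ‖g‖^2 := by
    rw [e0, norm_neg, norm_smul]
    simp [abs_of_pos (by positivity : (0:ℝ) < 1/(L:ℝ))]
    ring
  have e3 : xp - z = (sv - z) - (1/(L:ℝ)) • g := by rw [hxp]; abel
  have e4 : ‖xp - z‖^2 = ‖sv - z‖^2 - 2 * ((1/(L:ℝ)) * ⟪sv - z, g⟫) + (1/(L:ℝ))^2 * ‖g‖^2 := by
    rw [e3, @norm_sub_sq_real, real_inner_smul_right, norm_smul]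
    simp [abs_of_pos (by positivity : (0:ℝ) < 1/(L:ℝ))]
    ring
  have e5 : ⟪g, z - sv⟫ = -⟪sv - z, g⟫ := by
    rw [real_inner_comm, ← inner_neg_left]; congr 1; abel
  rw [e1, e2] at h1
  rw [e5] at h2
  rw [e4]
  have q1 : (L:ℝ)/2 * ((1/(L:ℝ))^2 * ‖g‖^2) = ((1/(L:ℝ))*‖g‖^2)/2 := by
    field_simp
  have q2 : (L:ℝ)/2 * (‖sv - z‖^2 - (‖sv - z‖^2 - 2 * ((1/(L:ℝ)) * ⟪sv - z, g⟫)
      + (1/(L:ℝ))^2 * ‖g‖^2)) = ⟪sv - z, g⟫ - ((1/(L:ℝ))*‖g‖^2)/2 := by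
    field_simp
    ring
  linarith

private lemma nesterov_comb_id (T : ℝ) (a c z : E) :
    T*(T-1)*‖a-c‖^2 + T*‖a-z‖^2 = ‖T•(a-c) + (c-z)‖^2 + (T-1)*‖c-z‖^2 := by
  have h : a - z = (a-c) + (c-z) := by abel
  rw [h, norm_add_sq_real, norm_add_sq_real, norm_smul, real_inner_smul_left]
  rw [Real.norm_eq_abs, mul_pow, sq_abs]
  ring

end NesterovAux

set_option maxHeartbeats 1000000 in
/-- Nesterov accelerated gradient descent achieves the `O(1/k²)` rate
`F(x⁽ᵏ⁾) − F(x*) ≤ 2L‖x⁽⁰⁾ − x*‖²/(k+1)²` for convex `L`-smooth objectives. -/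
theorem nesterov_accelerated_gradient_rate {n : ℕ}
    (F : EuclideanSpace ℝ (Fin n) → ℝ) (L : NNReal) (hL : 0 < (L : ℝ))
    (hconv : ConvexOn ℝ Set.univ F) (hdiff : Differentiable ℝ F)
    (hsmooth : LipschitzWith L (gradient F))
    (xstar : EuclideanSpace ℝ (Fin n)) (hstar : ∀ z, F xstar ≤ F z)
    (t : ℕ → ℝ) (ht0 : t 0 = 1)
    (htrec : ∀ k, t (k + 1) = (1 + Real.sqrt (1 + 4 * (t k) ^ 2)) / 2)
    (x s : ℕ → EuclideanSpace ℝ (Fin n)) (hs0 : s 0 = x 0)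
    (hx : ∀ k, x (k + 1) = s k - (1 / (L : ℝ)) • gradient F (s k))
    (hs : ∀ k, s (k + 1) = x (k + 1) + ((t k - 1) / t (k + 1)) • (x (k + 1) - x k)) :
    ∀ k : ℕ, F (x k) - F xstar ≤ 2 * (L : ℝ) * ‖x 0 - xstar‖ ^ 2 / ((k : ℝ) + 1) ^ 2 := by
  -- basic facts about the sequence t
  have ht1 : ∀ k, 1 ≤ t k := by
    intro k
    induction k with
    | zero => rw [ht0]
    | succ k ih =>
      rw [htrec k]
      have h1 : (1:ℝ) ≤ Real.sqrt (1 + 4 * (t k)^2) := by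
        have h2 : Real.sqrt 1 ≤ Real.sqrt (1 + 4 * (t k)^2) :=
          Real.sqrt_le_sqrt (by nlinarith)
        rwa [Real.sqrt_one] at h2
      linarith
  have htpos : ∀ k, 0 < t k := fun k => lt_of_lt_of_le one_pos (ht1 k)
  have htsq : ∀ k, t (k+1)^2 - t (k+1) = (t k)^2 := by
    intro k
    have hsq : Real.sqrt (1 + 4 * (t k)^2) ^ 2 = 1 + 4 * (t k)^2 :=
      Real.sq_sqrt (by positivity)
    rw [htrec k]
    nlinarith [hsq]
  have htge : ∀ k : ℕ, ((k:ℝ) + 2)/2 ≤ t k := by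
    intro k
    induction k with
    | zero => rw [ht0]; norm_num
    | succ k ih =>
      rw [htrec k]
      have h1 : 2 * t k ≤ Real.sqrt (1 + 4 * (t k)^2) := by
        rw [show (2 * t k) = Real.sqrt ((2 * t k)^2) by
          rw [Real.sqrt_sq (by linarith [htpos k] : (0:ℝ) ≤ 2 * t k)]]
        exact Real.sqrt_le_sqrt (by nlinarith)
      push_cast
      nlinarith [ih]
  -- key inequality
  have hkey : ∀ k z, F (x (k+1)) ≤ F z + (L:ℝ)/2 * (‖s k - z‖^2 - ‖x (k+1) - z‖^2) := by
    intro k z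
    rw [hx k]
    exact nesterov_key_step F L hL hconv hdiff hsmooth (s k) z
  -- the Lyapunov sequence
  set u : ℕ → EuclideanSpace ℝ (Fin n) :=
    fun k => (t k - 1) • (x (k+1) - x k) + x (k+1) - xstar with hu
  have hlya : ∀ k, 2/(L:ℝ) * (t k)^2 * (F (x (k+1)) - F xstar) + ‖u k‖^2
      ≤ ‖x 0 - xstar‖^2 := by
    intro k
    induction k with
    | zero =>
      have hk := hkey 0 xstar
      rw [hs0] at hk
      have hu0 : u 0 = x 1 - xstar := by
        simp only [hu, ht0]; simp
      have hc : 2/(L:ℝ) * ((L:ℝ)/2 * (‖x 0 - xstar‖^2 - ‖x 1 - xstar‖^2))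
          = ‖x 0 - xstar‖^2 - ‖x 1 - xstar‖^2 := by
        field_simp
      have hmul : 2/(L:ℝ) * (F (x 1) - F xstar)
          ≤ 2/(L:ℝ) * ((L:ℝ)/2 * (‖x 0 - xstar‖^2 - ‖x 1 - xstar‖^2)) := by
        apply mul_le_mul_of_nonneg_left (by linarith [hk]) (by positivity)
      rw [hc] at hmul
      rw [hu0, ht0]
      linarith [hmul]
    | succ k ih =>
      set T : ℝ := t (k+1) with hT
      have hTpos : 0 < T := htpos (k+1)
      have hT1 : 1 ≤ T := ht1 (k+1)
      -- vector identities
      have hva : T • (s (k+1) - x (k+1)) + (x (k+1) - xstar) = u k := by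
        have h1 : s (k+1) - x (k+1) = ((t k - 1)/T) • (x (k+1) - x k) := by
          rw [hs k]; abel
        rw [h1, smul_smul, mul_div_cancel₀ _ (ne_of_gt hTpos)]
        simp only [hu]
        abel
      have hvb : T • (x (k+2) - x (k+1)) + (x (k+1) - xstar) = u (k+1) := by
        simp only [hu]
        rw [sub_smul, one_smul]
        abel
      -- combination identities
      have ida := nesterov_comb_id T (s (k+1)) (x (k+1)) xstar
      have idb := nesterov_comb_id T (x (k+2)) (x (k+1)) xstar
      rw [hva] at ida
      rw [hvb] at idb
      -- the two key inequalities
      have K1 := hkey (k+1) (x (k+1))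
      have K2 := hkey (k+1) xstar
      -- multiplied versions
      have m1 : T*(T-1) * (F (x (k+2)) - F (x (k+1)))
          ≤ T*(T-1) * ((L:ℝ)/2 * (‖s (k+1) - x (k+1)‖^2 - ‖x (k+2) - x (k+1)‖^2)) := by
        apply mul_le_mul_of_nonneg_left (by linarith [K1]) (by nlinarith)
      have m2 : T * (F (x (k+2)) - F xstar)
          ≤ T * ((L:ℝ)/2 * (‖s (k+1) - xstar‖^2 - ‖x (k+2) - xstar‖^2)) := by
        apply mul_le_mul_of_nonneg_left (by linarith [K2]) (by linarith)
      -- scale the identities by L/2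
      have ida' : (L:ℝ)/2 * (T*(T-1)*‖s (k+1) - x (k+1)‖^2 + T*‖s (k+1) - xstar‖^2)
          = (L:ℝ)/2 * (‖u k‖^2 + (T-1)*‖x (k+1) - xstar‖^2) := by rw [ida]
      have idb' : (L:ℝ)/2 * (T*(T-1)*‖x (k+2) - x (k+1)‖^2 + T*‖x (k+2) - xstar‖^2)
          = (L:ℝ)/2 * (‖u (k+1)‖^2 + (T-1)*‖x (k+1) - xstar‖^2) := by rw [idb]
      have hC : (T^2 - T) * (F (x (k+1)) - F xstar) = (t k)^2 * (F (x (k+1)) - F xstar) := by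
        rw [htsq k]
      have hsum : T^2 * (F (x (k+2)) - F xstar) - (t k)^2 * (F (x (k+1)) - F xstar)
          ≤ (L:ℝ)/2 * (‖u k‖^2 - ‖u (k+1)‖^2) := by
        linarith [m1, m2, ida', idb', hC]
      -- multiply by 2/L and combine with ih
      have hmul : 2/(L:ℝ) * (T^2 * (F (x (k+2)) - F xstar)
            - (t k)^2 * (F (x (k+1)) - F xstar))
          ≤ 2/(L:ℝ) * ((L:ℝ)/2 * (‖u k‖^2 - ‖u (k+1)‖^2)) :=
        mul_le_mul_of_nonneg_left hsum (by positivity)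
      have hc2 : 2/(L:ℝ) * ((L:ℝ)/2 * (‖u k‖^2 - ‖u (k+1)‖^2))
          = ‖u k‖^2 - ‖u (k+1)‖^2 := by field_simp
      rw [hc2] at hmul
      have hexp : 2/(L:ℝ) * (T^2 * (F (x (k+2)) - F xstar)
            - (t k)^2 * (F (x (k+1)) - F xstar))
          = 2/(L:ℝ) * T^2 * (F (x (k+2)) - F xstar)
            - 2/(L:ℝ) * (t k)^2 * (F (x (k+1)) - F xstar) := by ring
      rw [hexp] at hmul
      linarith [ih, hmul]
  -- conclude
  intro k
  cases k with
  | zero =>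
    -- gradient at the minimizer vanishes
    have hmin : IsLocalMin F xstar := Filter.Eventually.of_forall hstar
    have hfd : fderiv ℝ F xstar = 0 := hmin.fderiv_eq_zero
    have hgrad0 : gradient F xstar = 0 := by
      have h0 : HasFDerivAt F (0 : EuclideanSpace ℝ (Fin n) →L[ℝ] ℝ) xstar :=
        hfd ▸ (hdiff xstar).hasFDerivAt
      have hg : HasGradientAt F 0 xstar :=
        hasGradientAt_iff_hasFDerivAt.mpr (by simpa using h0)
      exact hg.gradient
    have hd := nesterov_descent_lemma F L hdiff hsmooth xstar (x 0)
    rw [hgrad0] at hd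
    simp only [inner_zero_left] at hd
    have : F (x 0) - F xstar ≤ (L:ℝ)/2 * ‖x 0 - xstar‖^2 := by linarith
    have hnn : (0:ℝ) ≤ ‖x 0 - xstar‖^2 := by positivity
    simp only [Nat.cast_zero]
    norm_num
    nlinarith
  | succ m =>
    have h := hlya m
    have hδ : 0 ≤ F (x (m+1)) - F xstar := by linarith [hstar (x (m+1))]
    have hun : (0:ℝ) ≤ ‖u m‖^2 := by positivity
    have h1 : 2/(L:ℝ) * (t m)^2 * (F (x (m+1)) - F xstar) ≤ ‖x 0 - xstar‖^2 := by
      linarith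
    have h2 : (t m)^2 * (F (x (m+1)) - F xstar) ≤ (L:ℝ)/2 * ‖x 0 - xstar‖^2 := by
      have := mul_le_mul_of_nonneg_left h1 (le_of_lt (by positivity : (0:ℝ) < (L:ℝ)/2))
      calc (t m)^2 * (F (x (m+1)) - F xstar)
          = (L:ℝ)/2 * (2/(L:ℝ) * (t m)^2 * (F (x (m+1)) - F xstar)) := by
            field_simp
        _ ≤ (L:ℝ)/2 * ‖x 0 - xstar‖^2 := this
    have hge := htge m
    have hmpos : (0:ℝ) < ((m:ℝ) + 2) := by positivity
    have hsq : ((m:ℝ)+2)^2 ≤ 4 * (t m)^2 := by nlinarith [htpos m]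
    have hpos2 : (0:ℝ) < (((m+1:ℕ):ℝ) + 1)^2 := by positivity
    rw [le_div_iff₀ hpos2]
    push_cast
    nlinarith [h2, hδ, hsq, htpos m]
end

section
/- Strong convexity of the RE objective: if L(·, y) is convex and differentiable in its first argument, and G is 1-Lipschitz with symmetric Jacobian and locally homogeneous with ∥∇G(x)∥ ≤ ρ < 1 for all x, then F(x) = L(x,y) + γ R(x) with R(x) = (1/2)xᵀ(x − G(x)) and γ > 0 is γ(1−ρ)-strongly convex, hence has a unique minimizer. -/
open scoped RealInnerProductSpace
open Set Filter

variable {n : ℕ}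

private lemma aux_lipG {G : EuclideanSpace ℝ (Fin n) → EuclideanSpace ℝ (Fin n)}
    (hGdiff : Differentiable ℝ G) {ρ : ℝ} (hnorm : ∀ x, ‖fderiv ℝ G x‖ ≤ ρ)
    (x y : EuclideanSpace ℝ (Fin n)) : ‖G y - G x‖ ≤ ρ * ‖y - x‖ :=
  Convex.norm_image_sub_le_of_norm_fderiv_le (fun z _ => hGdiff z)
    (fun z _ => hnorm z) convex_univ (mem_univ x) (mem_univ y)

private lemma aux_hconv {G : EuclideanSpace ℝ (Fin n) → EuclideanSpace ℝ (Fin n)}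
    (hGdiff : Differentiable ℝ G)
    (hsym : ∀ x u v, ⟪fderiv ℝ G x u, v⟫ = ⟪u, fderiv ℝ G x v⟫)
    (hhom : ∀ x, fderiv ℝ G x x = G x)
    {ρ : ℝ} (hnorm : ∀ x, ‖fderiv ℝ G x‖ ≤ ρ) :
    ConvexOn ℝ univ (fun x => ρ / 2 * ‖x‖ ^ 2 - 1 / 2 * ⟪x, G x⟫) := by
  constructor
  · exact convex_univ
  intro x _ y _ a b ha hb hab
  set v := y - x with hv
  set c : ℝ → EuclideanSpace ℝ (Fin n) := fun t => x + t • v with hc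
  set g : ℝ → ℝ := fun t => ρ / 2 * ‖c t‖ ^ 2 - 1 / 2 * ⟪c t, G (c t)⟫ with hg
  set d : ℝ → ℝ := fun t => ρ * ⟪c t, v⟫ - ⟪G (c t), v⟫ with hd
  have hcder : ∀ t, HasDerivAt c v t := fun t => by
    simpa [hc] using ((hasDerivAt_id t).smul_const v).const_add x
  have hder : ∀ t, HasDerivAt g (d t) t := by
    intro t
    have hGc : HasDerivAt (fun t => G (c t)) ((fderiv ℝ G (c t)) v) t :=
      (hGdiff (c t)).hasFDerivAt.comp_hasDerivAt t (hcder t)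
    have h1 : HasDerivAt (fun t => ⟪c t, c t⟫) (⟪c t, v⟫ + ⟪v, c t⟫) t :=
      (hcder t).inner ℝ (hcder t)
    have h2 : HasDerivAt (fun t => ⟪c t, G (c t)⟫)
        (⟪c t, (fderiv ℝ G (c t)) v⟫ + ⟪v, G (c t)⟫) t :=
      (hcder t).inner ℝ hGc
    have e2 : ⟪c t, (fderiv ℝ G (c t)) v⟫ + ⟪v, G (c t)⟫ = 2 * ⟪G (c t), v⟫ := by
      rw [← hsym, hhom, real_inner_comm v (G (c t))]; ring
    have h1' : HasDerivAt (fun t => ‖c t‖ ^ 2) (2 * ⟪c t, v⟫) t := by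
      have : (fun t => ‖c t‖ ^ 2) = fun t => ⟪c t, c t⟫ := by
        funext s; rw [real_inner_self_eq_norm_sq]
      rw [this]
      convert h1 using 1
      rw [real_inner_comm v (c t)]; ring
    rw [e2] at h2
    have := (h1'.const_mul (ρ / 2)).sub (h2.const_mul (1 / 2))
    have e3 : d t = ρ / 2 * (2 * ⟪c t, v⟫) - 1 / 2 * (2 * ⟪G (c t), v⟫) := by
      simp only [hd]; ring
    rw [e3]; exact this
  have hmono : Monotone d := by
    intro s t hst
    have key : ‖G (c t) - G (c s)‖ ≤ ρ * ((t - s) * ‖v‖) := by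
      have := aux_lipG hGdiff hnorm (c s) (c t) (ρ := ρ)
      have hcc : c t - c s = (t - s) • v := by
        simp only [hc]; module
      rwa [hcc, norm_smul, Real.norm_eq_abs, abs_of_nonneg (by linarith)] at this
    have h3 : ⟪G (c t) - G (c s), v⟫ ≤ ρ * ((t - s) * ‖v‖) * ‖v‖ :=
      le_trans (real_inner_le_norm _ _) (by
        have := norm_nonneg v
        nlinarith [norm_nonneg (G (c t) - G (c s))])
    have h4 : ⟪c t, v⟫ - ⟪c s, v⟫ = (t - s) * ‖v‖ ^ 2 := by
      rw [← inner_sub_left]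
      have hcc : c t - c s = (t - s) • v := by simp only [hc]; module
      rw [hcc, real_inner_smul_left, real_inner_self_eq_norm_sq]
    have h5 : ⟪G (c t), v⟫ - ⟪G (c s), v⟫ ≤ ρ * ((t - s) * ‖v‖) * ‖v‖ := by
      rw [← inner_sub_left]; exact h3
    have h6 : ⟪G (c t), v⟫ - ⟪G (c s), v⟫ ≤ ρ * (⟪c t, v⟫ - ⟪c s, v⟫) := by
      rw [h4]
      calc ⟪G (c t), v⟫ - ⟪G (c s), v⟫ ≤ ρ * ((t - s) * ‖v‖) * ‖v‖ := h5
        _ = ρ * ((t - s) * ‖v‖ ^ 2) := by ring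
    simp only [hd]
    linarith
  have hdiff : Differentiable ℝ g := fun t => (hder t).differentiableAt
  have hderiv : deriv g = d := funext fun t => (hder t).deriv
  have hconvg : ConvexOn ℝ univ g :=
    Monotone.convexOn_univ_of_deriv hdiff (hderiv ▸ hmono)
  have key := hconvg.2 (mem_univ (0 : ℝ)) (mem_univ (1 : ℝ)) ha hb hab
  have e0 : c b = a • x + b • y := by
    simp only [hc, hv]
    rw [show a = 1 - b by linarith]
    module
  have e1 : c 0 = x := by simp [hc]
  have e2 : c 1 = y := by simp [hc, hv]
  simpa only [hg, smul_eq_mul, mul_zero, zero_add, mul_one, e0, e1, e2] using key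

private lemma aux_affine {ℓ : EuclideanSpace ℝ (Fin n) → ℝ}
    (hℓconv : ConvexOn ℝ Set.univ ℓ) (hℓdiff : Differentiable ℝ ℓ)
    (x : EuclideanSpace ℝ (Fin n)) : ℓ 0 + fderiv ℝ ℓ 0 x ≤ ℓ x := by
  set g : ℝ → ℝ := fun t => ℓ (t • x) with hgdef
  have hcder : ∀ t : ℝ, HasDerivAt (fun t : ℝ => t • x) x t := fun t => by
    simpa using (hasDerivAt_id t).smul_const x
  have hgder : HasDerivAt g (fderiv ℝ ℓ 0 x) 0 := by
    have := (hℓdiff (0 • x)).hasFDerivAt.comp_hasDerivAt 0 (hcder 0)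
    simp only [zero_smul] at this; exact this
  have hslope : ∀ᶠ t in nhdsWithin (0 : ℝ) (Set.Ioi 0), slope g 0 t ≤ ℓ x - ℓ 0 := by
    filter_upwards [Ioo_mem_nhdsGT_of_mem (Set.mem_Ico.mpr ⟨le_refl _, zero_lt_one⟩)]
    intro t ht
    have h1 : g t ≤ (1 - t) * ℓ 0 + t * ℓ x := by
      have := hℓconv.2 (Set.mem_univ (0 : EuclideanSpace ℝ (Fin n))) (Set.mem_univ x)
        (by linarith [ht.1, ht.2] : (0:ℝ) ≤ 1 - t) (le_of_lt ht.1) (by ring)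
      simpa [hgdef, smul_eq_mul] using this
    have ht0 : (0:ℝ) < t := ht.1
    have hg0 : g 0 = ℓ 0 := by simp [hgdef]
    rw [slope_def_field, sub_zero, div_le_iff₀ ht0]
    nlinarith [h1, hg0]
  have htend : Filter.Tendsto (slope g 0) (nhdsWithin (0:ℝ) (Set.Ioi 0)) (nhds (fderiv ℝ ℓ 0 x)) :=
    ((hasDerivAt_iff_tendsto_slope).mp hgder).mono_left
      (nhdsWithin_mono _ (fun t ht => Set.mem_compl_singleton_iff.mpr (ne_of_gt ht)))
  have := le_of_tendsto htend hslope
  have hg1 : g 1 = ℓ x := by simp [hgdef]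
  linarith [this, hg1 ▸ (le_refl (g 1))]

/-- Strong convexity of the RE objective `F(x) = ℓ(x) + γ R(x)` when the enhancer `G`
is passive with Jacobian norm at most `ρ < 1`, and uniqueness of its minimizer. -/
theorem re_objective_strongly_convex {n : ℕ}
    (G : EuclideanSpace ℝ (Fin n) → EuclideanSpace ℝ (Fin n))
    (ℓ : EuclideanSpace ℝ (Fin n) → ℝ)
    (hℓconv : ConvexOn ℝ Set.univ ℓ) (hℓdiff : Differentiable ℝ ℓ)
    (hGdiff : Differentiable ℝ G) (hGlip : LipschitzWith 1 G)
    (hsym : ∀ x u v, ⟪fderiv ℝ G x u, v⟫ = ⟪u, fderiv ℝ G x v⟫)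
    (hhom : ∀ x, fderiv ℝ G x x = G x)
    (ρ : ℝ) (hρ : ρ < 1) (hnorm : ∀ x, ‖fderiv ℝ G x‖ ≤ ρ)
    (γ : ℝ) (hγ : 0 < γ) :
    StrongConvexOn Set.univ (γ * (1 - ρ))
        (fun x => ℓ x + γ * ((1 / 2 : ℝ) * ⟪x, x - G x⟫)) ∧
    ∃! xmin : EuclideanSpace ℝ (Fin n),
        ∀ z, ℓ xmin + γ * ((1 / 2 : ℝ) * ⟪xmin, xmin - G xmin⟫) ≤
             ℓ z + γ * ((1 / 2 : ℝ) * ⟪z, z - G z⟫) := by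
  have hρ0 : 0 ≤ ρ := le_trans (norm_nonneg _) (hnorm 0)
  set m := γ * (1 - ρ) with hmdef
  have hm : 0 < m := mul_pos hγ (by linarith)
  set F : EuclideanSpace ℝ (Fin n) → ℝ :=
    fun x => ℓ x + γ * ((1 / 2 : ℝ) * ⟪x, x - G x⟫) with hFdef
  have hEq : (fun x => F x - m / 2 * ‖x‖ ^ 2)
      = fun x => ℓ x + γ * (ρ / 2 * ‖x‖ ^ 2 - 1 / 2 * ⟪x, G x⟫) := by
    funext x
    simp only [hFdef, inner_sub_right, real_inner_self_eq_norm_sq, hmdef]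
    ring
  have hSC : StrongConvexOn Set.univ m F := by
    rw [strongConvexOn_iff_convex, hEq]
    exact hℓconv.add
      ((aux_hconv hGdiff hsym hhom hnorm).smul hγ.le :
        ConvexOn ℝ Set.univ fun x => γ * (ρ / 2 * ‖x‖ ^ 2 - 1 / 2 * ⟪x, G x⟫))
  refine ⟨hSC, ?_⟩
  -- coercivity lower bound
  set C : ℝ := ‖fderiv ℝ ℓ 0‖ + γ / 2 * ‖G 0‖ with hCdef
  have hC0 : 0 ≤ C := by positivity
  have hbound : ∀ x, ‖x‖ * (m / 2 * ‖x‖ - C) + ℓ 0 ≤ F x := by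
    intro x
    have h1 : ℓ 0 + fderiv ℝ ℓ 0 x ≤ ℓ x := aux_affine hℓconv hℓdiff x
    have h2 : -(‖fderiv ℝ ℓ 0‖ * ‖x‖) ≤ fderiv ℝ ℓ 0 x := by
      have := (fderiv ℝ ℓ 0).le_opNorm x
      have habs : |fderiv ℝ ℓ 0 x| ≤ ‖fderiv ℝ ℓ 0‖ * ‖x‖ := by
        simpa [Real.norm_eq_abs] using this
      linarith [neg_abs_le (fderiv ℝ ℓ 0 x)]
    have h3 : ⟪x, G x - G 0⟫ ≤ ρ * ‖x‖ ^ 2 := by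
      have hl : ‖G x - G 0‖ ≤ ρ * ‖x‖ := by
        simpa using aux_lipG hGdiff hnorm 0 x
      calc ⟪x, G x - G 0⟫ ≤ ‖x‖ * ‖G x - G 0‖ := real_inner_le_norm _ _
        _ ≤ ‖x‖ * (ρ * ‖x‖) := by
            exact mul_le_mul_of_nonneg_left hl (norm_nonneg x)
        _ = ρ * ‖x‖ ^ 2 := by ring
    have h4 : ⟪x, G 0⟫ ≤ ‖x‖ * ‖G 0‖ := real_inner_le_norm _ _
    have h5 : (1 - ρ) * ‖x‖ ^ 2 - ‖x‖ * ‖G 0‖ ≤ ⟪x, x - G x⟫ := by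
      have : ⟪x, x - G x⟫ = ‖x‖ ^ 2 - ⟪x, G x - G 0⟫ - ⟪x, G 0⟫ := by
        rw [inner_sub_right, inner_sub_right, real_inner_self_eq_norm_sq]; ring
      rw [this]; linarith
    have h6 : γ * ((1 / 2 : ℝ) * ⟪x, x - G x⟫)
        ≥ γ / 2 * ((1 - ρ) * ‖x‖ ^ 2) - γ / 2 * (‖x‖ * ‖G 0‖) := by
      nlinarith [h5, hγ.le]
    simp only [hFdef, hmdef, hCdef]
    nlinarith [h1, h2, h6]
  have hq : Filter.Tendsto (fun r : ℝ => r * (m / 2 * r - C) + ℓ 0)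
      Filter.atTop Filter.atTop := by
    apply Filter.tendsto_atTop_add_const_right
    apply Filter.Tendsto.atTop_mul_atTop₀ Filter.tendsto_id
    have h := Filter.tendsto_atTop_add_const_right Filter.atTop (-C)
      ((Filter.tendsto_id (α := ℝ)).const_mul_atTop (by positivity : (0:ℝ) < m / 2))
    simpa [sub_eq_add_neg] using h
  have hcoer : Filter.Tendsto F (Filter.cocompact _) Filter.atTop :=
    Filter.tendsto_atTop_mono hbound (hq.comp tendsto_norm_cocompact_atTop)
  have hFcont : Continuous F := by
    apply (hℓdiff.continuous).add
    exact continuous_const.mul (continuous_const.mul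
      (continuous_id.inner (continuous_id.sub hGdiff.continuous)))
  obtain ⟨xm, hxm⟩ := hFcont.exists_forall_le hcoer
  have hstrict := hSC.strictConvexOn hm
  refine ⟨xm, fun z => hxm z, fun z hz => ?_⟩
  exact hstrict.eq_of_isMinOn (fun w _ => hz w) (fun w _ => hxm w)
    (Set.mem_univ _) (Set.mem_univ _)
end
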